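/- Let l : 2^V → ℝ be submodular with l(∅) = 0, and suppose l is not increasing, i.e. there exist A ⊆ V and i ∈ V \ A with l(A ∪ {i}) < l(A) (equivalently, there exist a permutation π and an index k with l({π_1,…,π_k}) − l({π_1,…,π_{k−1}}) < 0). Then the componentwise-thresholded Lovász hinge L1_l is not a convex function on ℝ^p. -/

import Mathlib

open Finset

/-- The chain {σ₁,…,σⱼ}: the image under σ of the first j indices. -/
def chainSet {p : ℕ} (σ : Equiv.Perm (Fin p)) (j : ℕ) : Finset (Fin p) :=
  (Finset.univ.filter fun k : Fin p => (k : ℕ) < j).image σ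

/-- G_l(σ, s) = Σ_{j=1}^p s_{σ_j}·(l({σ₁,…,σⱼ}) − l({σ₁,…,σ_{j−1}})). -/
def lovaszSum {p : ℕ} (l : Finset (Fin p) → ℝ) (σ : Equiv.Perm (Fin p))
    (s : Fin p → ℝ) : ℝ :=
  ∑ j : Fin p, s (σ j) * (l (chainSet σ ((j : ℕ) + 1)) - l (chainSet σ (j : ℕ)))

/-- Indicator vector 1_A ∈ {0,1}^p of A ⊆ V. -/
def indic {p : ℕ} (A : Finset (Fin p)) : Fin p → ℝ := fun i => if i ∈ A then 1 else 0

/-- A permutation sorting s in decreasing order: s_{π_1} ≥ … ≥ s_{π_p}. -/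
def SortsDesc {p : ℕ} (π : Equiv.Perm (Fin p)) (s : Fin p → ℝ) : Prop :=
  ∀ j k : Fin p, j ≤ k → s (π k) ≤ s (π j)

/-- A canonical permutation sorting s in decreasing order. -/
noncomputable def sortDesc {p : ℕ} (s : Fin p → ℝ) : Equiv.Perm (Fin p) :=
  Tuple.sort (fun i => -s i)

/-- The Lovász extension ℓ̂(s) = G_l(π, s) for a permutation π sorting s
decreasingly (independent of the choice of such π). -/
noncomputable def lovaszExt {p : ℕ} (l : Finset (Fin p) → ℝ) (s : Fin p → ℝ) : ℝ :=
  lovaszSum l (sortDesc s) s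

/-- Submodularity: l(A) + l(B) ≥ l(A ∪ B) + l(A ∩ B). -/
def Submodular {p : ℕ} (l : Finset (Fin p) → ℝ) : Prop :=
  ∀ A B : Finset (Fin p), l (A ∪ B) + l (A ∩ B) ≤ l A + l B

/-- The slack-rescaling surrogate S_l(s) = max_{I⊆V} l(I)·(1 − 2 Σ_{i∈I}(1 − s_i)). -/
noncomputable def slackSur {p : ℕ} (l : Finset (Fin p) → ℝ) (s : Fin p → ℝ) : ℝ :=
  Finset.univ.sup' Finset.univ_nonempty
    (fun I : Finset (Fin p) => l I * (1 - 2 * ∑ i ∈ I, (1 - s i)))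

/-- The margin-rescaling surrogate M_l(s) = max_{I⊆V} ( l(I) − 2 Σ_{i∈I}(1 − s_i) ). -/
noncomputable def marginSur {p : ℕ} (l : Finset (Fin p) → ℝ) (s : Fin p → ℝ) : ℝ :=
  Finset.univ.sup' Finset.univ_nonempty
    (fun I : Finset (Fin p) => l I - 2 * ∑ i ∈ I, (1 - s i))

/-- The Lovász hinge, general (non-monotonic) case. -/
noncomputable def hingeGen {p : ℕ} (l : Finset (Fin p) → ℝ) (s : Fin p → ℝ) : ℝ :=
  Finset.univ.sup' Finset.univ_nonempty
    (fun σ : Equiv.Perm (Fin p) => max 0 (lovaszSum l σ s))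

/-- The Lovász hinge, increasing case (componentwise thresholding). -/
noncomputable def hingeInc {p : ℕ} (l : Finset (Fin p) → ℝ) (s : Fin p → ℝ) : ℝ :=
  Finset.univ.sup' Finset.univ_nonempty
    (fun σ : Equiv.Perm (Fin p) =>
      ∑ j : Fin p, max (s (σ j)) 0 *
        (l (chainSet σ ((j : ℕ) + 1)) - l (chainSet σ (j : ℕ))))

/-!
Thresholding makes `hingeInc l s` depend only on the positive part of `s`, and on an indicator
vector `1_B` it equals `l B`: every chain sum of `1_B` is at most `l B` by diminishing returns, with
equality for a chain that exhausts `B` first. Now `x = 2 • 1_A - 1_{A ∪ {i}}` has positive part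
`1_A`, and `1_A` is the midpoint of `x` and `1_{A ∪ {i}}`; convexity would give
`l A ≤ (l A + l (A ∪ {i})) / 2`, i.e. `l A ≤ l (A ∪ {i})`.
-/

section Chain

variable {p : ℕ} (σ : Equiv.Perm (Fin p))

lemma mem_chainSet {j : ℕ} {x : Fin p} : x ∈ chainSet σ j ↔ (σ.symm x : ℕ) < j := by
  simp only [chainSet, mem_image, mem_filter, mem_univ, true_and]
  exact ⟨fun ⟨k, hk, hkx⟩ => by rwa [← hkx, Equiv.symm_apply_apply],
    fun h => ⟨σ.symm x, h, σ.apply_symm_apply x⟩⟩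

@[simp]
lemma chainSet_zero : chainSet σ 0 = ∅ := by
  ext x; simp [mem_chainSet]

@[simp]
lemma chainSet_of_le {j : ℕ} (hj : p ≤ j) : chainSet σ j = univ := by
  ext x; simpa [mem_chainSet] using (σ.symm x).isLt.trans_le hj

lemma chainSet_mono {j k : ℕ} (hjk : j ≤ k) : chainSet σ j ⊆ chainSet σ k :=
  fun _ hx => ((mem_chainSet σ).1 hx).trans_le hjk |> (mem_chainSet σ).2

lemma chainSet_succ (j : Fin p) :
    chainSet σ ((j : ℕ) + 1) = insert (σ j) (chainSet σ j) := by
  ext x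
  simp only [mem_insert, mem_chainSet, Nat.lt_succ_iff_lt_or_eq, Fin.val_inj,
    Equiv.symm_apply_eq, eq_comm (a := x), or_comm]

lemma apply_notMem_chainSet (j : Fin p) : σ j ∉ chainSet σ j := by
  simp [mem_chainSet]

lemma apply_mem_chainSet_succ (j : Fin p) : σ j ∈ chainSet σ ((j : ℕ) + 1) := by
  simp [mem_chainSet]

end Chain

lemma Fin.sum_univ_sub {M : Type*} [AddCommGroup M] (p : ℕ) (g : ℕ → M) :
    ∑ j : Fin p, (g ((j : ℕ) + 1) - g j) = g p - g 0 := by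
  rw [Fin.sum_univ_eq_sum_range (fun j => g (j + 1) - g j)]
  exact sum_range_sub g p

section Submodular

variable {p : ℕ} {l : Finset (Fin p) → ℝ}

lemma Submodular.indic_mul_gain_le (hsub : Submodular l) (B : Finset (Fin p)) {C : Finset (Fin p)}
    {e : Fin p} (he : e ∉ C) :
    indic B e * (l (insert e C) - l C) ≤ l (B ∩ insert e C) - l (B ∩ C) := by
  by_cases heB : e ∈ B
  · have hunion : C ∪ insert e (B ∩ C) = insert e C := by
      ext x; simp only [mem_union, mem_insert, mem_inter]; tauto
    have hinter : C ∩ insert e (B ∩ C) = B ∩ C := by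
      ext x; simp only [mem_inter, mem_insert]
      constructor
      · rintro ⟨hxC, rfl | hx⟩
        exacts [absurd hxC he, hx]
      · tauto
    have := hsub C (insert e (B ∩ C))
    rw [hunion, hinter] at this
    rw [indic, if_pos heB, one_mul, inter_insert_of_mem heB]
    linarith
  · rw [indic, if_neg heB, zero_mul, inter_insert_of_notMem heB, sub_self]

lemma Submodular.lovaszSum_indic_le (hsub : Submodular l) (h0 : l ∅ = 0)
    (σ : Equiv.Perm (Fin p)) (B : Finset (Fin p)) : lovaszSum l σ (indic B) ≤ l B :=
  calc lovaszSum l σ (indic B)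
      ≤ ∑ j : Fin p, (l (B ∩ chainSet σ ((j : ℕ) + 1)) - l (B ∩ chainSet σ j)) := by
        refine sum_le_sum fun j _ => ?_
        rw [chainSet_succ]
        exact hsub.indic_mul_gain_le B (apply_notMem_chainSet σ j)
    _ = l B := by
        rw [Fin.sum_univ_sub p (fun n => l (B ∩ chainSet σ n))]
        simp [h0]

end Submodular

section Sorted

variable {p : ℕ} {σ : Equiv.Perm (Fin p)} {B : Finset (Fin p)}

lemma lovaszSum_indic_of_chainSet_card_eq (l : Finset (Fin p) → ℝ)
    (hσ : chainSet σ #B = B) : lovaszSum l σ (indic B) = l B - l ∅ := by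
  have step : ∀ j : Fin p,
      indic B (σ j) * (l (chainSet σ ((j : ℕ) + 1)) - l (chainSet σ j)) =
        l (B ∩ chainSet σ ((j : ℕ) + 1)) - l (B ∩ chainSet σ j) := by
    intro j
    rcases lt_or_ge (j : ℕ) #B with hj | hj
    · have hsub : chainSet σ ((j : ℕ) + 1) ⊆ B := hσ ▸ chainSet_mono σ hj
      rw [indic, if_pos (hsub (apply_mem_chainSet_succ σ j)), one_mul,
        inter_eq_right.2 hsub, inter_eq_right.2 ((chainSet_mono σ j.val.le_succ).trans hsub)]
    · have hsup : B ⊆ chainSet σ j := hσ ▸ chainSet_mono σ hj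
      rw [indic, if_neg fun h => apply_notMem_chainSet σ j (hsup h), zero_mul,
        inter_eq_left.2 hsup, inter_eq_left.2 (hsup.trans (chainSet_mono σ j.val.le_succ)),
        sub_self]
  rw [lovaszSum, sum_congr rfl fun j _ => step j,
    Fin.sum_univ_sub p (fun n => l (B ∩ chainSet σ n))]
  simp

lemma sortDesc_sortsDesc (s : Fin p → ℝ) : SortsDesc (sortDesc s) s :=
  fun _ _ hjk => neg_le_neg_iff.1 (Tuple.monotone_sort (fun i => -s i) hjk)

lemma SortsDesc.apply_mem_of_le (hσ : SortsDesc σ (indic B)) {j k : Fin p} (hjk : j ≤ k)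
    (hk : σ k ∈ B) : σ j ∈ B := by
  by_contra hj
  have := hσ j k hjk
  simp only [indic, hk, hj, if_true, if_false] at this
  norm_num at this

lemma SortsDesc.apply_mem_iff (hσ : SortsDesc σ (indic B)) (j : Fin p) :
    σ j ∈ B ↔ (j : ℕ) < #B := by
  constructor
  · intro hj
    have : (Iic j).image σ ⊆ B := by
      simpa [image_subset_iff] using fun k hk => hσ.apply_mem_of_le hk hj
    simpa [card_image_of_injective _ σ.injective] using card_le_card this
  · intro hj
    by_contra hjB
    have : B ⊆ (Iio j).image σ := fun b hb => mem_image.2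
      ⟨σ.symm b, mem_Iio.2 (lt_of_not_ge fun h => hjB (hσ.apply_mem_of_le h (by simpa))),
        σ.apply_symm_apply b⟩
    have := card_le_card this
    rw [card_image_of_injective _ σ.injective, Fin.card_Iio] at this
    omega

lemma SortsDesc.chainSet_card_eq (hσ : SortsDesc σ (indic B)) : chainSet σ #B = B := by
  ext x
  rw [mem_chainSet, ← hσ.apply_mem_iff, Equiv.apply_symm_apply]

end Sorted

section Hinge

variable {p : ℕ} {l : Finset (Fin p) → ℝ}

lemma indic_nonneg (B : Finset (Fin p)) (i : Fin p) : 0 ≤ indic B i := by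
  unfold indic; split_ifs <;> norm_num

lemma hingeInc_congr_of_max_zero {s t : Fin p → ℝ} (h : ∀ i, max (s i) 0 = max (t i) 0) :
    hingeInc l s = hingeInc l t := by
  simp only [hingeInc, h]

lemma Submodular.hingeInc_indic (hsub : Submodular l) (h0 : l ∅ = 0) (B : Finset (Fin p)) :
    hingeInc l (indic B) = l B := by
  have hmax : ∀ i, max (indic B i) 0 = indic B i := fun i => max_eq_left (indic_nonneg B i)
  refine le_antisymm (sup'_le _ _ fun σ _ => ?_)
    (le_sup'_of_le _ (mem_univ (sortDesc (indic B))) ?_)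
  · simp only [hmax]
    exact hsub.lovaszSum_indic_le h0 σ B
  · simp only [hmax]
    rw [← lovaszSum,
      lovaszSum_indic_of_chainSet_card_eq l (sortDesc_sortsDesc _).chainSet_card_eq, h0, sub_zero]

end Hinge

theorem hingeInc_not_convex_of_not_increasing_general (p : ℕ)
    (l : Finset (Fin p) → ℝ) (hsub : Submodular l) (h0 : l ∅ = 0)
    (hdec : ∃ (A : Finset (Fin p)) (i : Fin p), i ∉ A ∧ l (insert i A) < l A) :
    ¬ ConvexOn ℝ Set.univ (hingeInc l) := by
  obtain ⟨A, i, hiA, hlt⟩ := hdec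
  intro hconv
  set a := indic A
  set b := indic (insert i A)
  have hpos : ∀ k, max (((2 : ℝ) • a - b) k) 0 = max (a k) 0 := by
    intro k
    simp only [a, b, indic, mem_insert, Pi.sub_apply, Pi.smul_apply, smul_eq_mul]
    split_ifs <;> grind
  have hmid : (1 / 2 : ℝ) • ((2 : ℝ) • a - b) + (1 / 2 : ℝ) • b = a := by
    funext k; simp only [Pi.add_apply, Pi.smul_apply, Pi.sub_apply, smul_eq_mul]; ring
  have hjensen := hconv.2 (Set.mem_univ ((2 : ℝ) • a - b)) (Set.mem_univ b)
    (by norm_num : (0 : ℝ) ≤ 1 / 2) (by norm_num : (0 : ℝ) ≤ 1 / 2) (by norm_num)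
  rw [hmid, hingeInc_congr_of_max_zero hpos, hsub.hingeInc_indic h0, hsub.hingeInc_indic h0,
    smul_eq_mul, smul_eq_mul] at hjensen
  linarith

/-- if a submodular l (with l(∅)=0) is not increasing, then the
componentwise-thresholded Lovász hinge is not convex on ℝ^p. -/
theorem hingeInc_not_convex_of_not_increasing (p : ℕ) (hp : 1 ≤ p)
    (l : Finset (Fin p) → ℝ) (hsub : Submodular l) (h0 : l ∅ = 0)
    (hdec : ∃ (A : Finset (Fin p)) (i : Fin p), i ∉ A ∧ l (insert i A) < l A) :
    ¬ ConvexOn ℝ Set.univ (hingeInc l) :=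
  hingeInc_not_convex_of_not_increasing_general p l hsub h0 hdec
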